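/- arXiv:1901.03725 — 5 statements merged into one kernel-verified Lean document; each statement's English description precedes it below -/
import Mathlib

section
/- Let m and d be integers with 1 ≤ m ≤ d, and let L ⊆ ℂ^4 be any 2-dimensional linear subspace (a line in P^3). Then the ℂ-vector space of homogeneous polynomials of degree d in ℂ[x_0,x_1,x_2,x_3] lying in I(L)^m has dimension binom(d+3,3) − (1/6)·m·(m+1)·(3d+5−2m); equivalently, vanishing to order m along a line imposes exactly c_{m,d} = (1/6)·m·(m+1)·(3d+5−2m) conditions on forms of degree d. -/
/-!
A linear change of coordinates preserves degrees and transports vanishing ideals, so we may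
assume that `L` is the coordinate plane `x₂ = x₃ = 0`. Its ideal is the monomial ideal
`(x₂, x₃)`, so the degree-`d` part of `I(L)^m` is spanned by the monomials `x^e` with `|e| = d`
and `e₂ + e₃ ≥ m`. There are `(k + 1)(d - k + 1)` of them with `e₂ + e₃ = k`, and summing over
`m ≤ k ≤ d` gives `binom(d+3,3) - c_{m,d}`.
-/

open MvPolynomial

noncomputable section

abbrev C4 : Type := Fin 4 → ℂ
abbrev R3 : Type := MvPolynomial (Fin 4) ℂ

/-- The homogeneous ideal of the line in `P^3` corresponding to a linear subspace
`L ⊆ ℂ^4`: all polynomials vanishing identically on `L`. -/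
def lineIdeal (L : Submodule ℂ C4) : Ideal R3 where
  carrier := {F | ∀ v ∈ L, eval v F = 0}
  add_mem' := by
    intro a b ha hb v hv
    simp [ha v hv, hb v hv]
  zero_mem' := by
    intro v hv
    simp
  smul_mem' := by
    intro c F hF v hv
    simp [smul_eq_mul, hF v hv]

theorem Submodule.exists_linearEquiv_map_eq {K V : Type*} [Field K] [AddCommGroup V] [Module K V]
    [FiniteDimensional K V] {p q : Submodule K V}
    (h : Module.finrank K p = Module.finrank K q) : ∃ e : V ≃ₗ[K] V, p.map (e : V →ₗ[K] V) = q := by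
  obtain ⟨p', hp⟩ := p.exists_isCompl
  obtain ⟨q', hq⟩ := q.exists_isCompl
  have h' : Module.finrank K p' = Module.finrank K q' := by
    have := Submodule.finrank_add_eq_of_isCompl hp
    have := Submodule.finrank_add_eq_of_isCompl hq
    omega
  let e := (p.prodEquivOfIsCompl p' hp).symm ≪≫ₗ
    ((LinearEquiv.ofFinrankEq p q h).prodCongr (LinearEquiv.ofFinrankEq p' q' h')) ≪≫ₗ
    q.prodEquivOfIsCompl q' hq
  refine ⟨e, Submodule.eq_of_le_of_finrank_eq ?_ ?_⟩
  · rintro _ ⟨v, hv, rfl⟩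
    simp [e, Submodule.prodEquivOfIsCompl_symm_apply_left p p' hp ⟨v, hv⟩]
  · rw [LinearEquiv.finrank_map_eq, h]

section CoordinateSubspace

variable {σ K : Type*} [Field K]

variable (K) in
def coordinateSubspace (s : Set σ) : Submodule K (σ → K) :=
  LinearMap.ker (LinearMap.funLeft K K ((↑) : s → σ))

theorem mem_coordinateSubspace {s : Set σ} {v : σ → K} :
    v ∈ coordinateSubspace K s ↔ ∀ i ∈ s, v i = 0 := by
  simp [coordinateSubspace, LinearMap.funLeft, _root_.funext_iff]

theorem finrank_coordinateSubspace [Fintype σ] (s : Finset σ) :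
    Module.finrank K (coordinateSubspace K (s : Set σ)) = Fintype.card σ - s.card := by
  have hsurj := LinearMap.funLeft_surjective_of_injective K K _
    (Subtype.val_injective : Function.Injective ((↑) : ↥(s : Set σ) → σ))
  have := LinearMap.finrank_range_add_finrank_ker (LinearMap.funLeft K K ((↑) : ↥(s : Set σ) → σ))
  rw [LinearMap.range_eq_top.mpr hsurj, finrank_top, Module.finrank_fintype_fun_eq_card,
    Module.finrank_fintype_fun_eq_card] at this
  simp only [Finset.coe_sort_coe, Fintype.card_coe] at this
  rw [coordinateSubspace]
  omega

end CoordinateSubspace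

namespace MvPolynomial

variable {σ K : Type*} [Field K]

section LinearSubst

variable [Fintype σ] [DecidableEq σ]

def linearSubst (f : (σ → K) →ₗ[K] σ → K) : MvPolynomial σ K →ₐ[K] MvPolynomial σ K :=
  aeval (LinearMap.toMatrix' f).toMvPolynomial

theorem aeval_linearSubst (f : (σ → K) →ₗ[K] σ → K) (v : σ → K) (F : MvPolynomial σ K) :
    aeval v (linearSubst f F) = aeval (f v) F := by
  have hrows : (fun i => aeval v ((LinearMap.toMatrix' f).toMvPolynomial i)) = f v := by
    funext i
    exact (Matrix.toMvPolynomial_eval_eq_apply _ i v).trans (by rw [LinearMap.toMatrix'_mulVec])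
  rw [linearSubst, aeval_eq_bind₁, aeval_bind₁, hrows]

theorem IsHomogeneous.linearSubst {F : MvPolynomial σ K} {d : ℕ} (hF : F.IsHomogeneous d)
    (f : (σ → K) →ₗ[K] σ → K) : (linearSubst f F).IsHomogeneous d := by
  have h := hF.aeval _ (Matrix.toMvPolynomial_isHomogeneous (LinearMap.toMatrix' f))
  rwa [one_mul] at h

theorem map_linearSubst_vanishingIdeal_le {S T : Set (σ → K)} {f : (σ → K) →ₗ[K] σ → K}
    (hf : Set.MapsTo f T S) :
    Ideal.map (linearSubst f) (vanishingIdeal K S) ≤ vanishingIdeal K T := by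
  rw [Ideal.map_le_iff_le_comap]
  intro F hF v hv
  rw [aeval_linearSubst]
  exact hF _ (hf hv)

theorem linearSubst_symm_linearSubst [Infinite K] (e : (σ → K) ≃ₗ[K] σ → K)
    (F : MvPolynomial σ K) : linearSubst e.symm.toLinearMap (linearSubst e.toLinearMap F) = F :=
  funext fun v => by
    simp only [← aeval_eq_eval, aeval_linearSubst, LinearEquiv.coe_coe, LinearEquiv.apply_symm_apply]

variable (K) in
def formsInVanishingIdealPow (S : Set (σ → K)) (m d : ℕ) : Submodule K (MvPolynomial σ K) :=
  homogeneousSubmodule σ K d ⊓ (vanishingIdeal K S ^ m).restrictScalars K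

theorem linearSubst_mem_formsInVanishingIdealPow {S T : Set (σ → K)} {f : (σ → K) →ₗ[K] σ → K}
    (hf : Set.MapsTo f T S) {m d : ℕ} {F : MvPolynomial σ K}
    (hF : F ∈ formsInVanishingIdealPow K S m d) :
    linearSubst f F ∈ formsInVanishingIdealPow K T m d := by
  refine ⟨hF.1.linearSubst f, ?_⟩
  refine Ideal.pow_right_mono (map_linearSubst_vanishingIdeal_le hf) m ?_
  rw [← Ideal.map_pow]
  exact Ideal.mem_map_of_mem _ hF.2

theorem finrank_formsInVanishingIdealPow_image [Infinite K] (e : (σ → K) ≃ₗ[K] σ → K)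
    (S : Set (σ → K)) (m d : ℕ) :
    Module.finrank K (formsInVanishingIdealPow K (e '' S) m d) =
      Module.finrank K (formsInVanishingIdealPow K S m d) := by
  have hS : Set.MapsTo e S (e '' S) := Set.mapsTo_image e S
  have hS' : Set.MapsTo e.symm (e '' S) S := by
    rintro _ ⟨v, hv, rfl⟩
    simpa using hv
  refine LinearEquiv.finrank_eq (LinearEquiv.ofLinearMap
    ((linearSubst e.toLinearMap).toLinearMap.restrict
      fun _ => linearSubst_mem_formsInVanishingIdealPow hS)
    ((linearSubst e.symm.toLinearMap).toLinearMap.restrict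
      fun _ => linearSubst_mem_formsInVanishingIdealPow hS') ?_ ?_)
  · exact LinearMap.ext fun F => Subtype.ext (linearSubst_symm_linearSubst e.symm F)
  · exact LinearMap.ext fun F => Subtype.ext (linearSubst_symm_linearSubst e F)

end LinearSubst

theorem vanishingIdeal_coordinateSubspace [Infinite K] (s : Set σ) :
    vanishingIdeal K (coordinateSubspace K s : Set (σ → K)) = Ideal.span (X '' s) := by
  classical
  refine le_antisymm (fun F hF => ?_) ?_
  · set J : Ideal (MvPolynomial σ K) := Ideal.span (X '' s)
    -- Setting the variables in `s` to zero is the identity modulo `J`, and it kills `F`.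
    let κ : MvPolynomial σ K →ₐ[K] MvPolynomial σ K := aeval fun i => if i ∈ s then 0 else X i
    have hκ : (Ideal.Quotient.mkₐ K J).comp κ = Ideal.Quotient.mkₐ K J := by
      ext i
      by_cases hi : i ∈ s
      · have hXi : X i ∈ J := Ideal.subset_span (Set.mem_image_of_mem X hi)
        simpa [κ, hi] using (Ideal.Quotient.eq_zero_iff_mem.mpr hXi).symm
      · simp [κ, hi]
    have hκF : κ F = 0 := funext fun v => by
      rw [map_zero, ← aeval_eq_eval, ← AlgHom.comp_apply, comp_aeval]
      exact hF _ (mem_coordinateSubspace.mpr fun i hi => by simp [hi])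
    rw [← Ideal.Quotient.eq_zero_iff_mem, ← Ideal.Quotient.mkₐ_eq_mk K, ← hκ, AlgHom.comp_apply,
      hκF, map_zero]
  · rw [Ideal.span_le]
    rintro _ ⟨i, hi, rfl⟩ v hv
    simpa using mem_coordinateSubspace.mp hv i hi

theorem support_subset_of_mem_span_X_image_pow {R : Type*} [CommSemiring R] {s : Finset σ}
    {m : ℕ} {F : MvPolynomial σ R} (hF : F ∈ Ideal.span (X '' (s : Set σ)) ^ m) :
    ∀ e ∈ F.support, m ≤ ∑ i ∈ s, e i := by
  classical
  induction m generalizing F with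
  | zero => simp
  | succ m ih =>
    rw [pow_succ] at hF
    refine Submodule.mul_induction_on hF (fun G hG H hH e he => ?_) (fun G H hG hH e he => ?_)
    · obtain ⟨a, ha, b, hb, rfl⟩ := Finset.mem_add.mp (support_mul G H he)
      obtain ⟨i, hi, hbi⟩ := mem_ideal_span_X_image.mp hH b hb
      have : 1 ≤ ∑ i ∈ s, b i :=
        (Nat.one_le_iff_ne_zero.mpr hbi).trans (Finset.single_le_sum (by simp) hi)
      simp only [Finsupp.add_apply, Finset.sum_add_distrib]
      have := ih hG a ha
      omega
    · rcases Finset.mem_union.mp (support_add he) with h | h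
      exacts [hG e h, hH e h]

theorem monomial_mem_span_X_image_pow {R : Type*} [CommSemiring R] [Fintype σ] {s : Finset σ}
    {m : ℕ} {e : σ →₀ ℕ} (he : m ≤ ∑ i ∈ s, e i) (r : R) :
    monomial e r ∈ Ideal.span (X '' (s : Set σ)) ^ m := by
  classical
  rw [monomial_eq, Finsupp.prod_fintype _ _ (by simp), ← Finset.prod_mul_prod_compl s]
  refine Ideal.mul_mem_left _ _ (Ideal.mul_mem_right _ _ (Ideal.pow_le_pow_right he ?_))
  rw [← Finset.prod_pow_eq_pow_sum]
  exact Ideal.prod_mem_prod fun i hi =>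
    Ideal.pow_mem_pow (Ideal.subset_span (Set.mem_image_of_mem X hi)) _

theorem restrictScalars_span_X_image_pow {R : Type*} [CommSemiring R] [Fintype σ]
    (s : Finset σ) (m : ℕ) :
    (Ideal.span (X '' (s : Set σ)) ^ m : Ideal (MvPolynomial σ R)).restrictScalars R =
      restrictSupport R {e | m ≤ ∑ i ∈ s, e i} := by
  refine le_antisymm (fun F hF => support_subset_of_mem_span_X_image_pow hF) ?_
  rw [restrictSupport_eq_span, Submodule.span_le]
  rintro _ ⟨e, he, rfl⟩
  exact monomial_mem_span_X_image_pow he 1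

theorem formsInVanishingIdealPow_coordinateSubspace [Fintype σ] [Infinite K] (s : Finset σ)
    (m d : ℕ) :
    formsInVanishingIdealPow K (coordinateSubspace K (s : Set σ)) m d =
      restrictSupport K {e | e.degree = d ∧ m ≤ ∑ i ∈ s, e i} := by
  rw [formsInVanishingIdealPow, vanishingIdeal_coordinateSubspace,
    restrictScalars_span_X_image_pow, homogeneousSubmodule_eq_finsupp_supported]
  ext F
  exact Set.subset_inter_iff.symm

theorem finrank_restrictSupport (S : Set (σ →₀ ℕ)) :
    Module.finrank K (restrictSupport K S) = Nat.card S :=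
  Module.finrank_eq_nat_card_basis (basisRestrictSupport K S)

end MvPolynomial

open Finset.HasAntidiagonal in
theorem ncard_setOf_degree_eq_and_le_sum_pair (m d : ℕ) :
    {e : Fin 4 →₀ ℕ | e.degree = d ∧ m ≤ ∑ i ∈ ({2, 3} : Finset (Fin 4)), e i}.ncard =
      ∑ k ∈ Finset.Icc m d, (k + 1) * (d - k + 1) := by
  let g : (Σ _ : ℕ, (ℕ × ℕ) × (ℕ × ℕ)) → Fin 4 →₀ ℕ := fun x =>
    Finsupp.equivFunOnFinite.symm ![x.2.2.1, x.2.2.2, x.2.1.1, x.2.1.2]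
  let I := (Finset.Icc m d).sigma fun k => antidiagonal k ×ˢ antidiagonal (d - k)
  have hdeg (e : Fin 4 →₀ ℕ) : e.degree = e 0 + e 1 + e 2 + e 3 := by
    rw [Finsupp.degree_eq_sum, Fin.sum_univ_four]
  have hpair (e : Fin 4 →₀ ℕ) : ∑ i ∈ ({2, 3} : Finset (Fin 4)), e i = e 2 + e 3 :=
    Finset.sum_pair (by decide)
  have himage : {e : Fin 4 →₀ ℕ | e.degree = d ∧ m ≤ ∑ i ∈ ({2, 3} : Finset (Fin 4)), e i} =
      g '' I := by
    ext e
    simp only [Set.mem_ofPred_eq, hdeg, hpair, Set.mem_image, Finset.coe_sigma, Set.mem_sigma_iff,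
      Finset.coe_Icc, Set.mem_Icc, Finset.coe_product, Set.mem_prod, Finset.mem_coe,
      mem_antidiagonal, Sigma.exists, Prod.exists, g, I]
    constructor
    · rintro ⟨hd, hm⟩
      refine ⟨e 2 + e 3, e 2, e 3, e 0, e 1, ⟨⟨hm, by omega⟩, rfl, by omega⟩, ?_⟩
      ext i
      fin_cases i <;> rfl
    · rintro ⟨k, a, b, c, c', ⟨⟨hmk, hkd⟩, hab, hcc'⟩, rfl⟩
      simp only [Finsupp.equivFunOnFinite_symm_apply_apply, Matrix.cons_val_zero,
        Matrix.cons_val_one, Matrix.cons_val]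
      omega
  have hinj : Set.InjOn g I := by
    rintro ⟨k, ⟨a, b⟩, ⟨c, c'⟩⟩ hx ⟨k', ⟨a', b'⟩, ⟨c₁, c₁'⟩⟩ hx' h
    simp only [Finset.coe_sigma, Set.mem_sigma_iff, Finset.coe_product, Set.mem_prod,
      Finset.mem_coe, mem_antidiagonal, I] at hx hx'
    have := fun i => DFunLike.congr_fun h i
    simp only [Finsupp.equivFunOnFinite_symm_apply_apply, Fin.forall_fin_succ, Matrix.cons_val_zero,
      Matrix.cons_val_succ, Matrix.cons_val_fin_one, forall_const, g] at this
    obtain ⟨rfl, rfl, rfl, rfl⟩ := this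
    obtain rfl : k = k' := by omega
    rfl
  rw [himage, hinj.ncard_image, Set.ncard_coe_finset, Finset.card_sigma]
  simp [Finset.Nat.card_antidiagonal]

theorem six_mul_sum_range (d n : ℕ) (hn : n ≤ d + 1) :
    6 * ((∑ k ∈ Finset.range n, (k + 1) * (d - k + 1) : ℕ) : ℤ) =
      n * (n + 1) * (3 * d + 5 - 2 * n) := by
  induction n with
  | zero => simp
  | succ n ih =>
    rw [Finset.sum_range_succ, Nat.cast_add, mul_add, ih (by omega)]
    push_cast [Nat.cast_sub (by omega : n ≤ d)]
    ring

theorem six_mul_choose_three (n : ℕ) : 6 * (n + 3).choose 3 = (n + 1) * (n + 2) * (n + 3) := by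
  rw [← show Nat.factorial 3 = 6 from rfl, ← Nat.descFactorial_eq_factorial_mul_choose]
  simp only [Nat.descFactorial_succ, Nat.descFactorial_zero, Nat.reduceSubDiff, tsub_zero]
  ring

theorem six_mul_sum_Icc (m d : ℕ) (hmd : m ≤ d) :
    6 * ((∑ k ∈ Finset.Icc m d, (k + 1) * (d - k + 1) : ℕ) : ℤ) =
      6 * ((d + 3).choose 3 : ℤ) - m * (m + 1) * (3 * d + 5 - 2 * m) := by
  have hchoose : (6 * (d + 3).choose 3 : ℤ) = (d + 1) * (d + 2) * (d + 3) := by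
    exact_mod_cast six_mul_choose_three d
  rw [← Finset.Ico_add_one_right_eq_Icc, Nat.cast_sum,
    Finset.sum_Ico_eq_sub _ (by omega : m ≤ d + 1), mul_sub, ← Nat.cast_sum, ← Nat.cast_sum,
    six_mul_sum_range d _ le_rfl, six_mul_sum_range d _ (by omega), hchoose]
  push_cast
  ring

theorem stmt_0_general (m d : ℕ) (hmd : m ≤ d)
    (L : Submodule ℂ C4) (hL : Module.finrank ℂ ↥L = 2) :
    6 * (Module.finrank ℂ
        ↥(homogeneousSubmodule (Fin 4) ℂ d ⊓
          Submodule.restrictScalars ℂ ((lineIdeal L) ^ m)) : ℤ) =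
      6 * ((d + 3).choose 3 : ℤ) -
        (m : ℤ) * ((m : ℤ) + 1) * (3 * (d : ℤ) + 5 - 2 * (m : ℤ)) := by
  let L₀ := coordinateSubspace ℂ (({2, 3} : Finset (Fin 4)) : Set (Fin 4))
  obtain ⟨e, he⟩ := Submodule.exists_linearEquiv_map_eq (p := L₀) (q := L)
    (by rw [finrank_coordinateSubspace, hL]; rfl)
  change 6 * (Module.finrank ℂ (formsInVanishingIdealPow ℂ (L : Set C4) m d) : ℤ) = _
  rw [← he, Submodule.map_coe, LinearEquiv.coe_coe, finrank_formsInVanishingIdealPow_image,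
    formsInVanishingIdealPow_coordinateSubspace, finrank_restrictSupport, Nat.card_coe_set_eq,
    ncard_setOf_degree_eq_and_le_sum_pair, six_mul_sum_Icc m d hmd]

/-- Vanishing to order `m` along a line imposes exactly
`c_{m,d} = m(m+1)(3d+5-2m)/6` conditions on forms of degree `d ≥ m`:
the space of degree-`d` forms in `I(L)^m` has dimension
`binom(d+3,3) - m(m+1)(3d+5-2m)/6`. (Stated multiplied through by 6, in `ℤ`.) -/
theorem stmt_0 (m d : ℕ) (hm : 1 ≤ m) (hmd : m ≤ d)
    (L : Submodule ℂ C4) (hL : Module.finrank ℂ ↥L = 2) :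
    6 * (Module.finrank ℂ
        ↥(homogeneousSubmodule (Fin 4) ℂ d ⊓
          Submodule.restrictScalars ℂ ((lineIdeal L) ^ m)) : ℤ) =
      6 * ((d + 3).choose 3 : ℤ) -
        (m : ℤ) * ((m : ℤ) + 1) * (3 * (d : ℤ) + 5 - 2 * (m : ℤ)) :=
  stmt_0_general m d hmd L hL
end
end

section
/- Let L_1, L_2, L_3, L_4 ⊆ ℂ^4 be 2-dimensional linear subspaces (lines in P^3) which are pairwise disjoint. Then there exists a nonzero homogeneous polynomial of degree 3 in ℂ[x_0,x_1,x_2,x_3] vanishing identically on all four lines; that is, the system 𝓛_3(1,1,1,1) of cubic surfaces containing four pairwise skew lines is nonempty. -/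
/-!
A cubic form on `ℂ⁴` has `20` coefficients. Restricting it to a plane `L` through a basis of `L`
gives a binary cubic, which has `4` coefficients, so vanishing on `L` imposes at most `4` linear
conditions. Four planes impose at most `16 < 20` conditions, hence some nonzero cubic satisfies
them all.
-/

open MvPolynomial

noncomputable section

open Module

namespace MvPolynomial

variable {σ K : Type*} [Field K]

instance [Finite σ] (m : ℕ) : FiniteDimensional K (homogeneousSubmodule σ K m) :=
  Module.Finite.iff_fg.mpr (homogeneousSubmodule_fg σ K m)

def degreeEqEquivAntidiagonalTuple (n m : ℕ) :
    {d : Fin n →₀ ℕ | d.degree = m} ≃ Finset.Nat.antidiagonalTuple n m :=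
  Finsupp.equivFunOnFinite.subtypeEquiv fun d => by
    simp [Finsupp.degree_eq_sum, Finset.Nat.mem_antidiagonalTuple]

theorem finrank_homogeneousSubmodule_fin (n m : ℕ) :
    finrank K (homogeneousSubmodule (Fin n) K m) = (Finset.Nat.antidiagonalTuple n m).card := by
  rw [homogeneousSubmodule_eq_finsupp_supported,
    (AddMonoidAlgebra.supportedEquivFinsupp _).finrank_eq,
    (Finsupp.domLCongr (degreeEqEquivAntidiagonalTuple n m)).finrank_eq,
    finrank_finsupp_self, Fintype.card_coe]

variable {ι : Type*} [Fintype ι]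

/-- The restriction to `span b`, written in the coordinates given by `b`. -/
def substLinear (b : ι → σ → K) : MvPolynomial σ K →ₐ[K] MvPolynomial ι K :=
  aeval fun k => ∑ j, C (b j k) * X j

theorem IsHomogeneous.substLinear {F : MvPolynomial σ K} {m : ℕ} (hF : F.IsHomogeneous m)
    (b : ι → σ → K) : (substLinear b F).IsHomogeneous m := by
  rw [← one_mul m]
  exact hF.aeval _ fun k => IsHomogeneous.sum _ _ 1 fun j _ => isHomogeneous_C_mul_X _ j

theorem eval_substLinear (b : ι → σ → K) (F : MvPolynomial σ K) (c : ι → K) :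
    eval c (substLinear b F) = eval (∑ j, c j • b j) F := by
  rw [substLinear, aeval_def, eval_eval₂]
  congr 1
  · ext x
    simp
  · ext k
    simp [mul_comm]

def homogeneousSubstLinear (b : ι → σ → K) (m : ℕ) :
    homogeneousSubmodule σ K m →ₗ[K] homogeneousSubmodule ι K m :=
  ((substLinear b).toLinearMap.comp (homogeneousSubmodule σ K m).subtype).codRestrict _
    fun F => F.2.substLinear b

theorem eval_eq_zero_of_substLinear_eq_zero {L : Submodule K (σ → K)} (b : Basis ι K L)
    {F : MvPolynomial σ K} (hF : substLinear (fun j => (b j : σ → K)) F = 0) :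
    ∀ v ∈ L, eval v F = 0 := by
  intro v hv
  have hsum : ∑ j, b.repr ⟨v, hv⟩ j • (b j : σ → K) = v := by
    simpa only [Submodule.coe_sum, Submodule.coe_smul] using
      congrArg Subtype.val (b.sum_repr ⟨v, hv⟩)
  rw [← hsum, ← eval_substLinear, hF, map_zero]

theorem exists_isHomogeneous_ne_zero_eval_eq_zero {n : ℕ} {κ : Type*} [Fintype κ]
    (L : κ → Submodule K (Fin n → K)) {r m : ℕ} (hL : ∀ i, finrank K (L i) = r)
    (hlt : Fintype.card κ * (Finset.Nat.antidiagonalTuple r m).card <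
      (Finset.Nat.antidiagonalTuple n m).card) :
    ∃ F : MvPolynomial (Fin n) K,
      F ≠ 0 ∧ F.IsHomogeneous m ∧ ∀ i, ∀ v ∈ L i, eval v F = 0 := by
  let b i : Basis (Fin r) K (L i) := Module.finBasisOfFinrankEq K (L i) (hL i)
  let Φ := LinearMap.pi fun i => homogeneousSubstLinear (fun j => (b i j : Fin n → K)) m
  have hrank : finrank K (κ → homogeneousSubmodule (Fin r) K m) <
      finrank K (homogeneousSubmodule (Fin n) K m) := by
    simpa [finrank_pi_fintype, finrank_homogeneousSubmodule_fin] using hlt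
  obtain ⟨F, hFker, hF0⟩ := Submodule.exists_mem_ne_zero_of_ne_bot
    (LinearMap.ker_ne_bot_of_finrank_lt (f := Φ) hrank)
  refine ⟨F, fun h => hF0 (Subtype.ext h), F.2, fun i => ?_⟩
  exact eval_eq_zero_of_substLinear_eq_zero (b i) (congrArg Subtype.val (congrFun hFker i))

end MvPolynomial

theorem stmt_3_general (L : Fin 4 → Submodule ℂ C4)
    (hdim : ∀ i, Module.finrank ℂ ↥(L i) = 2) :
    ∃ F : R3, F ≠ 0 ∧ F.IsHomogeneous 3 ∧ ∀ i, F ∈ lineIdeal (L i) :=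
  exists_isHomogeneous_ne_zero_eval_eq_zero L hdim (by decide)

/-- The system `𝓛_3(1,1,1,1)` of cubic surfaces through four pairwise skew
lines in `P^3` is nonempty: there is a nonzero cubic form vanishing on all four lines. -/
theorem stmt_3 (L : Fin 4 → Submodule ℂ C4)
    (hdim : ∀ i, Module.finrank ℂ ↥(L i) = 2)
    (hskew : ∀ i j, i ≠ j → L i ⊓ L j = ⊥) :
    ∃ F : R3, F ≠ 0 ∧ F.IsHomogeneous 3 ∧ ∀ i, F ∈ lineIdeal (L i) :=
  stmt_3_general L hdim
end
end

section
/- Let L_1, L_2, L_3, L_4 ⊆ ℂ^4 be 2-dimensional linear subspaces (lines in P^3) which are pairwise disjoint, and let m ≥ 1 be an integer. Then there exists a nonzero homogeneous polynomial F of degree 3m in ℂ[x_0,x_1,x_2,x_3] with F ∈ I(L_i)^m for i = 1,2,3,4. Moreover, for every m ≥ 8 one has binom(3m+3,3) < (2/3)·m·(m+1)·(7m+5), so for m ≥ 8 the linear system 𝓛_{3m}(m,m,m,m) is nonempty despite having negative virtual dimension, hence special. -/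
/-!
Restricting a form of degree `n` to the span of `r` vectors gives a form of degree `n` in `r`
variables, and these make up a space of dimension `binom(r + n - 1, n)`. So vanishing on `s`
subspaces of dimension `r` imposes at most `s · binom(r + n - 1, n)` linear conditions. For four
lines in `P^3` and cubics that is `16 < 20 = binom(6, 3)`, so some nonzero cubic `F` contains all
four lines, and `F ^ m` has multiplicity `m` along each of them.
-/

open MvPolynomial

noncomputable section

open Module

namespace MvPolynomial

variable {K σ τ : Type*} [Field K]

section restrictToSpan

variable [Fintype τ] (u : τ → σ → K)

def restrictToSpan : MvPolynomial σ K →ₐ[K] MvPolynomial τ K :=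
  bind₁ fun j => ∑ k, C (u k j) * X k

theorem eval_restrictToSpan (a : τ → K) (F : MvPolynomial σ K) :
    eval a (restrictToSpan u F) = eval (∑ k, a k • u k) F := by
  have hpoint : ∑ k, a k • u k = fun j => eval a (∑ k, C (u k j) * X k) := by
    ext j
    simp [mul_comm]
  rw [hpoint, restrictToSpan, eval, eval₂Hom_bind₁]
  rfl

theorem IsHomogeneous.restrictToSpan {F : MvPolynomial σ K} {n : ℕ} (hF : F.IsHomogeneous n) :
    (MvPolynomial.restrictToSpan u F).IsHomogeneous n := by
  simpa [MvPolynomial.restrictToSpan] using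
    hF.aeval _ fun j => IsHomogeneous.sum _ _ _ fun k _ => isHomogeneous_C_mul_X (u k j) k

end restrictToSpan

instance [Finite σ] (n : ℕ) : Module.Finite K (homogeneousSubmodule σ K n) :=
  Module.Finite.iff_fg.mpr (homogeneousSubmodule_fg σ K n)

variable [Fintype σ]

theorem finrank_homogeneousSubmodule (n : ℕ) :
    finrank K (homogeneousSubmodule σ K n) = (Fintype.card σ + n - 1).choose n := by
  classical
  have hsupport :
      {d : σ →₀ ℕ | d.degree = n} = ↑(Finset.univ.finsuppAntidiag n : Finset (σ →₀ ℕ)) := by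
    ext d
    simp [Finsupp.degree_eq_sum]
  rw [homogeneousSubmodule_eq_finsupp_supported]
  refine (finrank_eq_nat_card_basis (basisRestrictSupport K {d : σ →₀ ℕ | d.degree = n})).trans ?_
  rw [hsupport, Nat.card_coe_set_eq, Set.ncard_coe_finset,
    Finset.card_finsuppAntidiag_nat_eq_choose, Finset.card_univ]

theorem exists_isHomogeneous_forall_eval_eq_zero {ι : Type*} [Fintype ι] {r n : ℕ}
    (P : ι → Submodule K (σ → K)) (hP : ∀ i, finrank K (P i) = r)
    (hlt : Fintype.card ι * (r + n - 1).choose n < (Fintype.card σ + n - 1).choose n) :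
    ∃ F : MvPolynomial σ K, F ≠ 0 ∧ F.IsHomogeneous n ∧ ∀ i, ∀ w ∈ P i, eval w F = 0 := by
  let b i := finBasisOfFinrankEq K (P i) (hP i)
  let u i k : σ → K := b i k
  let restrictions : homogeneousSubmodule σ K n →ₗ[K] ι → homogeneousSubmodule (Fin r) K n :=
    LinearMap.pi fun i => (restrictToSpan (u i)).toLinearMap.restrict
      fun _ hF => hF.restrictToSpan (u i)
  obtain ⟨⟨F, hF⟩, hker, hF0⟩ := (Submodule.ne_bot_iff _).mp <|
    LinearMap.ker_ne_bot_of_finrank_lt (f := restrictions) (by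
      simpa [finrank_pi_fintype, finrank_homogeneousSubmodule] using hlt)
  refine ⟨F, fun h => hF0 (by simp [h]), hF, fun i w hw => ?_⟩
  have hvanish : restrictToSpan (u i) F = 0 := congrArg Subtype.val (congrFun hker i)
  have hw : ∑ k, (b i).repr ⟨w, hw⟩ k • u i k = w := by
    simpa only [Submodule.coe_sum, Submodule.coe_smul] using
      congrArg Subtype.val ((b i).sum_repr ⟨w, hw⟩)
  rw [← hw, ← eval_restrictToSpan, hvanish, map_zero]

end MvPolynomial

theorem three_mul_choose_lt (k : ℕ) (hk : 8 ≤ k) :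
    3 * (3 * k + 3).choose 3 < 2 * (k * (k + 1) * (7 * k + 5)) := by
  have hchoose : 6 * (3 * k + 3).choose 3 = (3 * k + 3) * (3 * k + 2) * (3 * k + 1) := by
    rw [show 6 = Nat.factorial 3 from rfl, ← Nat.descFactorial_eq_factorial_mul_choose]
    simp only [Nat.descFactorial_succ, Nat.descFactorial_zero, Nat.sub_zero]
    rw [show 3 * k + 3 - 2 = 3 * k + 1 by omega, show 3 * k + 3 - 1 = 3 * k + 2 by omega]
    ring
  nlinarith

theorem stmt_4_general (m : ℕ) (L : Fin 4 → Submodule ℂ C4)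
    (hdim : ∀ i, Module.finrank ℂ ↥(L i) = 2) :
    (∃ F : R3, F ≠ 0 ∧ F.IsHomogeneous (3 * m) ∧
      ∀ i, F ∈ (lineIdeal (L i)) ^ m) ∧
    (∀ k : ℕ, 8 ≤ k → 3 * (3 * k + 3).choose 3 < 2 * (k * (k + 1) * (7 * k + 5))) := by
  obtain ⟨F, hF0, hF3, hFL⟩ :=
    exists_isHomogeneous_forall_eval_eq_zero (n := 3) L hdim (by simp [Nat.choose])
  exact ⟨⟨F ^ m, pow_ne_zero m hF0, hF3.pow m,
    fun i => Ideal.pow_mem_pow (I := lineIdeal (L i)) (hFL i) m⟩, three_mul_choose_lt⟩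

/-- For four pairwise skew lines and any `m ≥ 1`, the system `𝓛_{3m}(m,m,m,m)`
is nonempty: there is a nonzero form of degree `3m` with multiplicity `m` along all
four lines. Moreover for every `m ≥ 8` one has
`binom(3m+3,3) < (2/3)·m(m+1)(7m+5)` (stated multiplied through by 3),
so for `m ≥ 8` the system has negative virtual dimension, hence is special. -/
theorem stmt_4 (m : ℕ) (hm : 1 ≤ m) (L : Fin 4 → Submodule ℂ C4)
    (hdim : ∀ i, Module.finrank ℂ ↥(L i) = 2)
    (hskew : ∀ i j, i ≠ j → L i ⊓ L j = ⊥) :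
    (∃ F : R3, F ≠ 0 ∧ F.IsHomogeneous (3 * m) ∧
      ∀ i, F ∈ (lineIdeal (L i)) ^ m) ∧
    (∀ k : ℕ, 8 ≤ k → 3 * (3 * k + 3).choose 3 < 2 * (k * (k + 1) * (7 * k + 5))) :=
  stmt_4_general m L hdim
end
end

section
/- Let A = ℂ[[t]] be the ring of formal power series, let S = A[x,y,z] be the polynomial ring in three variables over A, and let m, n ≥ 1 be integers. Let ε : S → ℂ[x,y,z] be the ring homomorphism applying the constant-coefficient map ℂ[[t]] → ℂ (evaluation t = 0) to coefficients. If F ∈ S satisfies F ∈ (x,y)^m and F ∈ (y − t, z)^n (where t ∈ S denotes the constant polynomial given by the power series t), then F_0 := ε(F) satisfies F_0 ∈ (x,y)^m, F_0 ∈ (y,z)^n, and F_0 ∈ (x,y,z)^{m+n} in ℂ[x,y,z]. Geometrically: a limit of surfaces with multiplicity m along a fixed line l and multiplicity n along a moving line r_t acquires multiplicity at least m+n at the intersection point of l and the limit line r_0. -/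
/-!
Substitute `x ↦ x y`, `z ↦ z (y - t)`. It maps `(x, y)` into `(y)` and `(y - t, z)` into
`(y - t)`, so the transform of `F` is divisible by `y ^ m` and by `(y - t) ^ n`, hence by their
product because `y - t` is a prime not dividing `y`. At `t = 0` the substitution becomes
`x ↦ x y`, `z ↦ z y`, which sends `x^a y^b z^c` to `x^a y^(a+b+c) z^c`: distinct monomials stay
distinct and the `y`-exponent records the total degree, so `y ^ (m + n)` dividing the transform
of `F₀` forces every monomial of `F₀` to have degree at least `m + n`.
-/

open MvPolynomial

noncomputable section

/-- `S = ℂ[[t]][x,y,z]`, the polynomial ring in three variables (indexed by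
`Fin 3`, with `x = X 0`, `y = X 1`, `z = X 2`) over the formal power series ring. -/
abbrev S : Type := MvPolynomial (Fin 3) (PowerSeries ℂ)

/-- `ε : ℂ[[t]][x,y,z] → ℂ[x,y,z]`, applying evaluation at `t = 0`
(the constant coefficient map) to the coefficients. -/
def eps : S →+* MvPolynomial (Fin 3) ℂ :=
  MvPolynomial.map (PowerSeries.constantCoeff (R := ℂ))

theorem Ideal.apply_mem_span_pair_pow {R R' : Type*} [CommSemiring R] [CommSemiring R']
    (f : R →+* R') {a u v : R} {k : ℕ} (h : a ∈ Ideal.span {u, v} ^ k) :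
    f a ∈ Ideal.span {f u, f v} ^ k := by
  simpa [Ideal.map_pow, Ideal.map_span, Set.image_pair] using Ideal.mem_map_of_mem f h

theorem Ideal.pow_dvd_of_mem_span_pair_pow {R : Type*} [CommSemiring R] {a u v d : R} {k : ℕ}
    (hu : d ∣ u) (hv : d ∣ v) (h : a ∈ Ideal.span {u, v} ^ k) : d ^ k ∣ a := by
  have hle : Ideal.span {u, v} ≤ Ideal.span {d} := by
    simp [Ideal.span_le, Set.insert_subset_iff, Ideal.mem_span_singleton, hu, hv]
  rw [← Ideal.mem_span_singleton, ← Ideal.span_singleton_pow]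
  exact Ideal.pow_right_mono hle k h

theorem MvPolynomial.prime_X_sub_C {σ R : Type*} [CommRing R] [IsDomain R] (i : σ) (r : R) :
    Prime (X i - C r : MvPolynomial σ R) := by
  classical
  let e := (renameEquiv R (Equiv.optionSubtypeNe i).symm).trans (optionEquivLeft R {j // j ≠ i})
  have he : e (X i - C r) = Polynomial.X - Polynomial.C (C r) := by
    simp [e, optionEquivLeft_X_none, optionEquivLeft_C]
  rw [← MulEquiv.prime_iff e.toMulEquiv]
  simpa [he] using Polynomial.prime_X_sub_C (C r)

theorem span_X_three_eq_idealOfVars (R : Type*) [CommSemiring R] :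
    Ideal.span {(X 0 : MvPolynomial (Fin 3) R), X 1, X 2} = idealOfVars (Fin 3) R := by
  congr 1
  ext p
  simp [Fin.exists_fin_succ, eq_comm]

section yChart

variable (R : Type*) [CommSemiring R]

def yChart : MvPolynomial (Fin 3) R →ₐ[R] MvPolynomial (Fin 3) R :=
  aeval ![X 0 * X 1, X 1, X 2 * X 1]

def yChartExponent (μ : Fin 3 →₀ ℕ) : Fin 3 →₀ ℕ := μ + Finsupp.single 1 (μ 0 + μ 2)

theorem yChartExponent_injective : Function.Injective yChartExponent := by
  intro μ ν h
  have h0 := DFunLike.congr_fun h 0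
  have h1 := DFunLike.congr_fun h 1
  have h2 := DFunLike.congr_fun h 2
  simp only [yChartExponent, Finsupp.add_apply, Finsupp.single_apply] at h0 h1 h2
  ext i
  fin_cases i <;> simp_all

variable {R}

theorem yChart_monomial (μ : Fin 3 →₀ ℕ) (c : R) :
    yChart R (monomial μ c) = monomial (yChartExponent μ) c := by
  simp [yChart, monomial_eq, Finsupp.prod_fintype _ _ (fun _ => pow_zero _), Fin.prod_univ_three,
    yChartExponent, Finsupp.single_apply]
  ring

theorem coeff_yChart (P : MvPolynomial (Fin 3) R) (μ : Fin 3 →₀ ℕ) :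
    coeff (yChartExponent μ) (yChart R P) = coeff μ P := by
  induction P using MvPolynomial.induction_on' with
  | monomial ν c =>
    simp only [yChart_monomial, coeff_monomial, yChartExponent_injective.eq_iff]
  | add P Q hP hQ => simp only [map_add, coeff_add, hP, hQ]

theorem mem_pow_idealOfVars_of_X_one_pow_dvd_yChart {P : MvPolynomial (Fin 3) R} {k : ℕ}
    (h : X 1 ^ k ∣ yChart R P) : P ∈ idealOfVars (Fin 3) R ^ k := by
  obtain ⟨Q, hQ⟩ := h
  rw [mem_pow_idealOfVars_iff']
  intro μ hμ
  have hlt : ¬ Finsupp.single 1 k ≤ yChartExponent μ := by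
    simp [Finsupp.single_le_iff, yChartExponent, Finsupp.degree_eq_sum, Fin.sum_univ_three] at hμ ⊢
    omega
  rw [← coeff_yChart, hQ, X_pow_eq_monomial, coeff_monomial_mul', if_neg hlt]

end yChart

def yChartFamily : S →ₐ[PowerSeries ℂ] S :=
  aeval ![X 0 * X 1, X 1, X 2 * (X 1 - C PowerSeries.X)]

theorem eps_yChartFamily (F : S) : eps (yChartFamily F) = yChart ℂ (eps F) := by
  suffices eps.comp yChartFamily.toRingHom = (yChart ℂ).toRingHom.comp eps from
    RingHom.congr_fun this F
  apply MvPolynomial.ringHom_ext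
  · intro r
    simp [eps, yChartFamily, yChart, MvPolynomial.algebraMap_eq]
  · intro i
    fin_cases i <;> simp [eps, yChartFamily, yChart]

theorem not_X_sub_C_dvd_X_pow (m : ℕ) : ¬ (X 1 - C PowerSeries.X : S) ∣ X 1 ^ m := by
  intro h
  have h := map_dvd (aeval ![(0 : PowerSeries ℂ), PowerSeries.X, 0]) h
  simp [PowerSeries.X_ne_zero] at h

theorem X_one_pow_mul_dvd_yChartFamily {m n : ℕ} {F : S}
    (hFl : F ∈ (Ideal.span {(X 0 : S), X 1}) ^ m)
    (hFr : F ∈ (Ideal.span {(X 1 : S) - C PowerSeries.X, X 2}) ^ n) :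
    X 1 ^ m * (X 1 - C PowerSeries.X) ^ n ∣ yChartFamily F := by
  have hl : X 1 ^ m ∣ yChartFamily F :=
    Ideal.pow_dvd_of_mem_span_pair_pow (by simp [yChartFamily]) (by simp [yChartFamily])
      (Ideal.apply_mem_span_pair_pow yChartFamily.toRingHom hFl)
  have hr : (X 1 - C PowerSeries.X) ^ n ∣ yChartFamily F :=
    Ideal.pow_dvd_of_mem_span_pair_pow (by simp [yChartFamily]) (by simp [yChartFamily])
      (Ideal.apply_mem_span_pair_pow yChartFamily.toRingHom hFr)
  obtain ⟨G, hG⟩ := hl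
  rw [hG] at hr ⊢
  exact mul_dvd_mul_left _
    ((prime_X_sub_C 1 PowerSeries.X).pow_dvd_of_dvd_mul_left n (not_X_sub_C_dvd_X_pow m) hr)

theorem stmt_12_general (m n : ℕ) (F : S)
    (hFl : F ∈ (Ideal.span {(X 0 : S), X 1}) ^ m)
    (hFr : F ∈ (Ideal.span {(X 1 : S) - C PowerSeries.X, X 2}) ^ n) :
    eps F ∈ (Ideal.span {(X 0 : MvPolynomial (Fin 3) ℂ), X 1}) ^ m ∧
    eps F ∈ (Ideal.span {(X 1 : MvPolynomial (Fin 3) ℂ), X 2}) ^ n ∧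
    eps F ∈ (Ideal.span {(X 0 : MvPolynomial (Fin 3) ℂ), X 1, X 2}) ^ (m + n) := by
  have eps_X (i : Fin 3) : eps (X i) = X i := map_X _ _
  have eps_X_sub_C : eps (X 1 - C PowerSeries.X) = X 1 := by simp [eps]
  refine ⟨?_, ?_, ?_⟩
  · simpa [eps_X] using Ideal.apply_mem_span_pair_pow eps hFl
  · simpa [eps_X, eps_X_sub_C] using Ideal.apply_mem_span_pair_pow eps hFr
  · obtain ⟨G, hG⟩ := X_one_pow_mul_dvd_yChartFamily hFl hFr
    rw [span_X_three_eq_idealOfVars]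
    refine mem_pow_idealOfVars_of_X_one_pow_dvd_yChart ⟨eps G, ?_⟩
    rw [← eps_yChartFamily, hG, map_mul, map_mul, map_pow, map_pow, eps_X, eps_X_sub_C, pow_add]

/-- A limit of surfaces with multiplicity `m` along the fixed line `l = {x = y = 0}`
and multiplicity `n` along the moving line `r_t = {y = t, z = 0}` satisfies the
same multiplicity conditions along `l` and `r_0`, and acquires multiplicity at
least `m + n` at the intersection point `p` (the origin): if `F ∈ (x,y)^m` and
`F ∈ (y - t, z)^n` in `S`, then `F₀ = ε(F)` lies in `(x,y)^m`, `(y,z)^n` and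
`(x,y,z)^{m+n}` in `ℂ[x,y,z]`. -/
theorem stmt_12 (m n : ℕ) (hm : 1 ≤ m) (hn : 1 ≤ n) (F : S)
    (hFl : F ∈ (Ideal.span {(X 0 : S), X 1}) ^ m)
    (hFr : F ∈ (Ideal.span {(X 1 : S) - C PowerSeries.X, X 2}) ^ n) :
    eps F ∈ (Ideal.span {(X 0 : MvPolynomial (Fin 3) ℂ), X 1}) ^ m ∧
    eps F ∈ (Ideal.span {(X 1 : MvPolynomial (Fin 3) ℂ), X 2}) ^ n ∧
    eps F ∈ (Ideal.span {(X 0 : MvPolynomial (Fin 3) ℂ), X 1, X 2}) ^ (m + n) :=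
  stmt_12_general m n F hFl hFr
end
end

section
/- Let A = ℂ[[t]], S = A[x,y,z], and let M = (t, x, y, z) be the maximal ideal of S generated by x, y, z and the constant polynomial t. Let R be the localization of S at M, and let m, n ≥ 1 be integers. Then in R the ideals generated by (x,y)^m and (y − t, z)^n satisfy: their intersection equals their product, i.e. (x,y)^m R ∩ (y − t, z)^n R = ((x,y)^m · (y − t, z)^n) R. -/
open MvPolynomial

noncomputable section

/-- Evaluation `S → ℂ` at the point `t = x = y = z = 0`.  Its kernel is precisely
the maximal ideal `M = (t, x, y, z)` of `S`, so the set where `φ ≠ 0` is the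
complement `S \ M`. -/
def phi : S →+* ℂ :=
  (PowerSeries.constantCoeff (R := ℂ)).comp (MvPolynomial.eval (0 : Fin 3 → PowerSeries ℂ))

/-- The multiplicative set `S \ M`, where `M = (t,x,y,z)` is the maximal ideal:
concretely, the polynomials not vanishing at `t = x = y = z = 0`. -/
def Mcompl : Submonoid S where
  carrier := {f | phi f ≠ 0}
  one_mem' := by simp [Set.mem_setOf_eq, map_one]
  mul_mem' := by
    intro a b ha hb
    simp only [Set.mem_setOf_eq, map_mul] at *
    exact mul_ne_zero ha hb

/-- `R = S_M`, the localization of `S` at the maximal ideal `M = (t,x,y,z)`. -/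
abbrev Rloc : Type := Localization Mcompl

/-!
Already in `S = A[x, y][z]` (`A = ℂ[[t]]`) the intersection `I^m ∩ J^n` of `I = (x, y)` and
`J = (a, z)`, `a = y - t`, equals `I^m J^n`; localizing preserves intersections and products.
Let `f ∈ I^m ∩ J^n`. Every coefficient of `f` as a polynomial in `z` lies in `I^m`, and membership
in `(a, z)^n` makes the coefficient of `z^k` divisible by `a^(n-k)`. The element `a` is a
nonzerodivisor modulo `I^m`: since `y^m ∈ I^m`, `(y - t) h ∈ I^m` gives `t^m h ∈ I^m`, and a
nonzero constant cannot push an element into a monomial ideal. So the coefficient of `z^k`, `k < n`,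
is `a^(n-k)` times an element of `I^m`, and `f` is a sum of elements of `I^m J^n`.
-/

namespace Ideal

variable {R : Type*} [CommRing R] {K : Ideal R}

theorem mem_of_pow_mul_mem {a : R} (ha : ∀ h, a * h ∈ K → h ∈ K) (e : ℕ) {h : R}
    (hh : a ^ e * h ∈ K) : h ∈ K := by
  induction e generalizing h with
  | zero => simpa using hh
  | succ e ih => exact ih (ha _ (by rwa [pow_succ', mul_assoc] at hh))

theorem mem_of_sub_mul_mem {a b h : R} {m : ℕ}
    (hb : b ^ m ∈ K) (ha : a ^ m * h ∈ K → h ∈ K) (hab : (b - a) * h ∈ K) : h ∈ K := by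
  refine ha ?_
  obtain ⟨q, hq⟩ := sub_dvd_pow_sub_pow b a m
  have : a ^ m * h = b ^ m * h - q * ((b - a) * h) := by linear_combination (-h) * hq
  rw [this]
  exact K.sub_mem (K.mul_mem_right _ hb) (K.mul_mem_left _ hab)

end Ideal

namespace MvPolynomial

open scoped Pointwise in
theorem span_monomial_image_pow {σ R : Type*} [CommSemiring R] (s : Set (σ →₀ ℕ)) (m : ℕ) :
    ∃ s' : Set (σ →₀ ℕ), Ideal.span ((fun d => monomial d (1 : R)) '' s) ^ m =
      Ideal.span ((fun d => monomial d (1 : R)) '' s') := by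
  have h (t : Set (σ →₀ ℕ)) : (fun d => monomial d (1 : R)) '' t =
      monomialOneHom R σ '' (Multiplicative.toAdd ⁻¹' t) := by
    ext; simp; rfl
  refine ⟨Multiplicative.ofAdd ⁻¹' ((Multiplicative.toAdd ⁻¹' s) ^ m), ?_⟩
  rw [h, h, Ideal.span, Submodule.span_pow, ← Set.image_pow]
  rfl

theorem mem_of_C_mul_mem_span_monomial_image {σ A : Type*} [CommRing A] [IsDomain A]
    {s : Set (σ →₀ ℕ)} {c : A} (hc : c ≠ 0) {h : MvPolynomial σ A}
    (hch : C c * h ∈ Ideal.span ((fun d => monomial d (1 : A)) '' s)) :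
    h ∈ Ideal.span ((fun d => monomial d (1 : A)) '' s) := by
  rwa [mem_ideal_span_monomial_image, C_mul', support_smul_eq hc,
    ← mem_ideal_span_monomial_image] at hch

theorem mem_of_X_sub_C_mul_mem_span_X_pow {A : Type*} [CommRing A] [IsDomain A] {t : A}
    (ht : t ≠ 0) (m : ℕ) {h : MvPolynomial (Fin 2) A}
    (hh : (X 1 - C t) * h ∈ Ideal.span {(X 0 : MvPolynomial (Fin 2) A), X 1} ^ m) :
    h ∈ Ideal.span {(X 0 : MvPolynomial (Fin 2) A), X 1} ^ m := by
  have hspan : Ideal.span {(X 0 : MvPolynomial (Fin 2) A), X 1} =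
      Ideal.span ((fun d => monomial d (1 : A)) '' {Finsupp.single 0 1, Finsupp.single 1 1}) := by
    simp [Set.image_pair, X]
  obtain ⟨s, hs⟩ := span_monomial_image_pow (σ := Fin 2) (R := A)
    {Finsupp.single 0 1, Finsupp.single 1 1} m
  refine Ideal.mem_of_sub_mul_mem (Ideal.pow_mem_pow (Ideal.subset_span (by simp)) m) ?_ hh
  rw [hspan, hs, ← C_pow]
  exact mem_of_C_mul_mem_span_monomial_image (pow_ne_zero m ht)

end MvPolynomial

namespace Polynomial

variable {P : Type*} [CommRing P]

theorem pow_sub_dvd_coeff_mul (a : P) {i j : ℕ} {f g : P[X]}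
    (hf : ∀ d, a ^ (i - d) ∣ f.coeff d) (hg : ∀ d, a ^ (j - d) ∣ g.coeff d) (d : ℕ) :
    a ^ (i + j - d) ∣ (f * g).coeff d := by
  rw [coeff_mul]
  refine Finset.dvd_sum fun ⟨u, v⟩ huv => ?_
  rw [Finset.HasAntidiagonal.mem_antidiagonal] at huv
  calc a ^ (i + j - d) ∣ a ^ ((i - u) + (j - v)) := pow_dvd_pow a (by omega)
    _ = a ^ (i - u) * a ^ (j - v) := pow_add a _ _
    _ ∣ f.coeff u * g.coeff v := mul_dvd_mul (hf u) (hg v)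

/-- `n - d` is truncated: the coefficients of degree `d ≥ n` are unconstrained. -/
def coeffPowSubDvdIdeal (a : P) (n : ℕ) : Ideal P[X] where
  carrier := {f | ∀ d, a ^ (n - d) ∣ f.coeff d}
  add_mem' hf hg d := by rw [coeff_add]; exact dvd_add (hf d) (hg d)
  zero_mem' d := by simp
  smul_mem' g f hf := by
    simpa using pow_sub_dvd_coeff_mul a (i := 0) (g := f) (fun d => by simp) hf

theorem span_C_X_le_coeffPowSubDvdIdeal (a : P) :
    Ideal.span {C a, X} ≤ coeffPowSubDvdIdeal a 1 := by
  rw [Ideal.span_le]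
  rintro p (rfl | rfl) d
  · rcases Nat.eq_zero_or_pos d with rfl | hd
    · simp
    · simp [coeff_C, hd.ne']
  · rcases eq_or_ne d 1 with rfl | hd
    · simp
    · simp [coeff_X, Ne.symm hd]

theorem span_C_X_pow_le_coeffPowSubDvdIdeal (a : P) (n : ℕ) :
    Ideal.span {C a, X} ^ n ≤ coeffPowSubDvdIdeal a n := by
  induction n with
  | zero => intro f _ d; simp
  | succ n ih =>
    rw [pow_succ]
    refine Ideal.mul_le.2 fun f hf g hg => ?_
    exact pow_sub_dvd_coeff_mul a (ih hf) (span_C_X_le_coeffPowSubDvdIdeal a hg)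

theorem map_C_inf_span_C_X_pow_le_mul {K : Ideal P} {a : P} (ha : ∀ h, a * h ∈ K → h ∈ K)
    (n : ℕ) :
    K.map C ⊓ Ideal.span {C a, X} ^ n ≤ K.map C * Ideal.span {C a, X} ^ n := by
  rintro f ⟨hfK, hfJ⟩
  set J : Ideal P[X] := Ideal.span {C a, X}
  have hCa : C a ∈ J := Ideal.subset_span (by simp)
  have hX : X ∈ J := Ideal.subset_span (by simp)
  have hcoeffK (k : ℕ) : f.coeff k ∈ K := Ideal.mem_map_C_iff.1 hfK k
  rw [f.as_sum_support_C_mul_X_pow]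
  refine Ideal.sum_mem _ fun k _ => ?_
  rcases lt_or_ge k n with hk | hk
  · obtain ⟨h, hh⟩ := span_C_X_pow_le_coeffPowSubDvdIdeal a n hfJ k
    have hhK : h ∈ K := Ideal.mem_of_pow_mul_mem ha (n - k) (hh ▸ hcoeffK k)
    have hJ : C a ^ (n - k) * X ^ k ∈ J ^ n := by
      simpa [← pow_add, Nat.sub_add_cancel hk.le] using
        Ideal.mul_mem_mul (Ideal.pow_mem_pow hCa (n - k)) (Ideal.pow_mem_pow hX k)
    rw [hh, show C (a ^ (n - k) * h) * X ^ k = C h * (C a ^ (n - k) * X ^ k) by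
      rw [C_mul, C_pow]; ring]
    exact Ideal.mul_mem_mul (Ideal.mem_map_of_mem C hhK) hJ
  · rw [← Nat.sub_add_cancel hk, pow_add, ← mul_assoc]
    exact Ideal.mul_mem_mul (Ideal.mul_mem_right _ _ (Ideal.mem_map_of_mem C (hcoeffK _)))
      (Ideal.pow_mem_pow hX n)

end Polynomial

section ThreeVariables

variable {A : Type*} [CommRing A]

def finThreeEquivPolynomial :
    MvPolynomial (Fin 3) A ≃ₐ[A] Polynomial (MvPolynomial (Fin 2) A) :=
  (renameEquiv A (finRotate 3)).trans (finSuccEquiv A 2)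

theorem finThreeEquivPolynomial_X_zero :
    finThreeEquivPolynomial (X 0 : MvPolynomial (Fin 3) A) = Polynomial.C (X 0) := by
  simpa [finThreeEquivPolynomial] using finSuccEquiv_X_succ (R := A) (j := (0 : Fin 2))

theorem finThreeEquivPolynomial_X_one :
    finThreeEquivPolynomial (X 1 : MvPolynomial (Fin 3) A) = Polynomial.C (X 1) := by
  simpa [finThreeEquivPolynomial] using finSuccEquiv_X_succ (R := A) (j := (1 : Fin 2))

theorem finThreeEquivPolynomial_X_two :
    finThreeEquivPolynomial (X 2 : MvPolynomial (Fin 3) A) = Polynomial.X := by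
  simpa [finThreeEquivPolynomial] using finSuccEquiv_X_zero (R := A) (n := 2)

theorem finThreeEquivPolynomial_C (a : A) :
    finThreeEquivPolynomial (C a : MvPolynomial (Fin 3) A) = Polynomial.C (C a) :=
  finThreeEquivPolynomial.commutes a

theorem span_X_pow_inf_span_X_sub_C_pow_le_mul [IsDomain A] {t : A} (ht : t ≠ 0) (m n : ℕ) :
    Ideal.span {(X 0 : MvPolynomial (Fin 3) A), X 1} ^ m ⊓ Ideal.span {X 1 - C t, X 2} ^ n ≤
      Ideal.span {(X 0 : MvPolynomial (Fin 3) A), X 1} ^ m * Ideal.span {X 1 - C t, X 2} ^ n := by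
  let e : MvPolynomial (Fin 3) A ≃+* Polynomial (MvPolynomial (Fin 2) A) :=
    finThreeEquivPolynomial.toRingEquiv
  have hI : (Ideal.span {(X 0 : MvPolynomial (Fin 3) A), X 1}).map e =
      (Ideal.span {(X 0 : MvPolynomial (Fin 2) A), X 1}).map Polynomial.C := by
    simp [e, Ideal.map_span, Set.image_pair, finThreeEquivPolynomial_X_zero,
      finThreeEquivPolynomial_X_one]
  have hJ : (Ideal.span {(X 1 : MvPolynomial (Fin 3) A) - C t, X 2}).map e =
      Ideal.span {Polynomial.C (X 1 - C t), Polynomial.X} := by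
    simp [e, Ideal.map_span, Set.image_pair, finThreeEquivPolynomial_X_one,
      finThreeEquivPolynomial_X_two, finThreeEquivPolynomial_C]
  rw [← e.idealComapOrderIso.symm.le_iff_le, OrderIso.map_inf]
  simp only [RingEquiv.idealComapOrderIso_symm_apply, Ideal.map_mul, Ideal.map_pow, hI, hJ]
  rw [← Ideal.map_pow]
  exact Polynomial.map_C_inf_span_C_X_pow_le_mul
    (fun _ => MvPolynomial.mem_of_X_sub_C_mul_mem_span_X_pow ht m) n

end ThreeVariables

theorem stmt_13_general (m n : ℕ) :
    Ideal.map (algebraMap S Rloc) ((Ideal.span {(X 0 : S), X 1}) ^ m) ⊓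
      Ideal.map (algebraMap S Rloc)
        ((Ideal.span {(X 1 : S) - C PowerSeries.X, X 2}) ^ n) =
    Ideal.map (algebraMap S Rloc)
      ((Ideal.span {(X 0 : S), X 1}) ^ m *
        (Ideal.span {(X 1 : S) - C PowerSeries.X, X 2}) ^ n) := by
  rw [← IsLocalization.map_inf Mcompl]
  exact congrArg _ <| le_antisymm
    (span_X_pow_inf_span_X_sub_C_pow_le_mul PowerSeries.X_ne_zero m n) Ideal.mul_le_inf

/-- In the localization `R` of `S = ℂ[[t]][x,y,z]` at the maximal ideal
`M = (t,x,y,z)`, the ideals generated by `(x,y)^m` and `(y - t, z)^n` satisfy: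
their intersection equals their product,
`(x,y)^m R ∩ (y - t, z)^n R = ((x,y)^m · (y - t, z)^n) R`. -/
theorem stmt_13 (m n : ℕ) (hm : 1 ≤ m) (hn : 1 ≤ n) :
    Ideal.map (algebraMap S Rloc) ((Ideal.span {(X 0 : S), X 1}) ^ m) ⊓
      Ideal.map (algebraMap S Rloc)
        ((Ideal.span {(X 1 : S) - C PowerSeries.X, X 2}) ^ n) =
    Ideal.map (algebraMap S Rloc)
      ((Ideal.span {(X 0 : S), X 1}) ^ m *
        (Ideal.span {(X 1 : S) - C PowerSeries.X, X 2}) ^ n) :=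
  stmt_13_general m n
end
end
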